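/- arXiv:2106.00917 — 2 statements merged into one kernel-verified Lean document; each statement's English description precedes it below -/
import Mathlib

section
/- Let ν ∈ (0,1/2), let a < b be real numbers, and let u, v ∈ L²(ℝ) be real-valued functions vanishing outside [a,b]. Then ∫_a^b ({}_a∂_x^{-ν}u)(x) · ({}_x∂_b^{-ν}v)(x) dx + ∫_a^b ({}_a∂_x^{-ν}v)(x) · ({}_x∂_b^{-ν}u)(x) dx = (1/Γ(2ν)) · ∫_a^b ∫_a^b u(ξ) v(η) |η-ξ|^{2ν-1} dη dξ. -/
open MeasureTheory

/-- Left-sided Riemann–Liouville fractional integral of order `ν` with base point `a`. -/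
noncomputable def RLleft (ν a : ℝ) (u : ℝ → ℝ) (x : ℝ) : ℝ :=
  (1 / Real.Gamma ν) * ∫ ξ in a..x, (x - ξ) ^ (ν - 1) * u ξ

/-- Right-sided Riemann–Liouville fractional integral of order `ν` with base point `b`. -/
noncomputable def RLright (ν b : ℝ) (u : ℝ → ℝ) (x : ℝ) : ℝ :=
  (1 / Real.Gamma ν) * ∫ ξ in x..b, (ξ - x) ^ (ν - 1) * u ξ

/-!
Write `RLleft ν a u x * RLright ν b v x` as a double integral over `a < ξ ≤ x < η ≤ b` and
integrate in `x` first: the beta integral `∫_ξ^η (x - ξ)^(ν-1) (η - x)^(ν-1) dx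
= Γ(ν)² / Γ(2ν) · (η - ξ)^(2ν-1)` turns the first summand into `1 / Γ(2ν)` times the integral of
`u ξ v η (η - ξ)^(2ν-1)` over the triangle `ξ < η`, and the second summand into the same integral
over the mirror triangle `η < ξ`. The two triangles fill the square up to the diagonal.
Fubini applies because `|u ξ v η| ≤ u ξ² + v η²` and `t ↦ |t|^(2ν-1)` is locally integrable.
-/

open Set
open scoped ENNReal

theorem integral_rpow_mul_one_sub_rpow {α β : ℝ} (hα : 0 < α) (hβ : 0 < β) :
    ∫ t in (0 : ℝ)..1, t ^ (α - 1) * (1 - t) ^ (β - 1) = ProbabilityTheory.beta α β := by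
  have h : Complex.betaIntegral α β = ↑(∫ t in (0 : ℝ)..1, t ^ (α - 1) * (1 - t) ^ (β - 1)) := by
    rw [Complex.betaIntegral, ← intervalIntegral.integral_ofReal]
    refine intervalIntegral.integral_congr fun t ht => ?_
    rw [uIcc_of_le zero_le_one] at ht
    simp only [Complex.ofReal_mul, Complex.ofReal_cpow ht.1,
      Complex.ofReal_cpow (sub_nonneg.2 ht.2)]
    push_cast; ring_nf
  rw [ProbabilityTheory.beta_eq_betaIntegralReal α β hα hβ, h, Complex.ofReal_re]

theorem integral_sub_rpow_mul_sub_rpow {α β ξ η : ℝ} (hα : 0 < α) (hβ : 0 < β) (h : ξ < η) :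
    ∫ x in ξ..η, (x - ξ) ^ (α - 1) * (η - x) ^ (β - 1) =
      ProbabilityTheory.beta α β * (η - ξ) ^ (α + β - 1) := by
  set c := η - ξ
  have hc : 0 < c := sub_pos.2 h
  have key : ∀ t ∈ uIcc (0 : ℝ) 1, (c * t + ξ - ξ) ^ (α - 1) * (η - (c * t + ξ)) ^ (β - 1) =
      c ^ (α + β - 2) * (t ^ (α - 1) * (1 - t) ^ (β - 1)) := by
    intro t ht
    rw [uIcc_of_le zero_le_one] at ht
    rw [show c * t + ξ - ξ = c * t by ring, show η - (c * t + ξ) = c * (1 - t) by ring,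
      Real.mul_rpow hc.le ht.1, Real.mul_rpow hc.le (sub_nonneg.2 ht.2),
      show α + β - 2 = (α - 1) + (β - 1) by ring, Real.rpow_add hc]
    ring
  have hsub := intervalIntegral.integral_comp_mul_add
    (fun x => (x - ξ) ^ (α - 1) * (η - x) ^ (β - 1)) hc.ne' ξ (a := 0) (b := 1)
  rw [intervalIntegral.integral_congr key, intervalIntegral.integral_const_mul,
    integral_rpow_mul_one_sub_rpow hα hβ, mul_zero, zero_add, mul_one,
    show c + ξ = η by ring, smul_eq_mul, eq_inv_mul_iff_mul_eq₀ hc.ne'] at hsub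
  rw [← hsub, show α + β - 1 = 1 + (α + β - 2) by ring, Real.rpow_add hc, Real.rpow_one]
  ring

theorem intervalIntegrable_sub_rpow_mul_sub_rpow {α β ξ η : ℝ} (hα : 0 < α) (hβ : 0 < β)
    (h : ξ < η) :
    IntervalIntegrable (fun x => (x - ξ) ^ (α - 1) * (η - x) ^ (β - 1)) volume ξ η := by
  refine intervalIntegral.intervalIntegrable_of_integral_ne_zero ?_
  rw [integral_sub_rpow_mul_sub_rpow hα hβ h]
  exact (mul_pos (ProbabilityTheory.beta_pos hα hβ) (Real.rpow_pos_of_pos (sub_pos.2 h) _)).ne'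

theorem setLIntegral_mul_comp_sub_le {a b : ℝ} {f K : ℝ → ℝ≥0∞} (hf : AEMeasurable f)
    (hK : Measurable K) :
    ∫⁻ p in Ioc a b ×ˢ Ioc a b, f p.1 * K (p.2 - p.1) ≤
      (∫⁻ x, f x) * ∫⁻ t in Icc (a - b) (b - a), K t := by
  have hslice : ∀ ξ ∈ Ioc a b, ∫⁻ η in Ioc a b, K (η - ξ) ≤ ∫⁻ t in Icc (a - b) (b - a), K t := by
    intro ξ hξ
    have := (measurePreserving_sub_right volume ξ).setLIntegral_comp_preimage_emb
      (measurableEmbedding_subRight ξ) K (Ioc (a - ξ) (b - ξ))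
    rw [preimage_sub_const_Ioc, sub_add_cancel, sub_add_cancel] at this
    rw [this]
    exact lintegral_mono_set (Ioc_subset_Icc_self.trans
      (Icc_subset_Icc (by linarith [hξ.2]) (by linarith [hξ.1])))
  rw [Measure.volume_eq_prod, ← Measure.prod_restrict,
    lintegral_prod (fun p => f p.1 * K (p.2 - p.1))
      (hf.restrict.comp_fst.mul (hK.comp (measurable_snd.sub measurable_fst)).aemeasurable)]
  calc ∫⁻ ξ in Ioc a b, ∫⁻ η in Ioc a b, f ξ * K (η - ξ)
      = ∫⁻ ξ in Ioc a b, f ξ * ∫⁻ η in Ioc a b, K (η - ξ) := by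
        refine lintegral_congr fun ξ => ?_
        exact lintegral_const_mul _ (hK.comp (measurable_id.sub_const ξ))
    _ ≤ ∫⁻ ξ in Ioc a b, f ξ * ∫⁻ t in Icc (a - b) (b - a), K t :=
        setLIntegral_mono' measurableSet_Ioc fun ξ hξ => mul_le_mul_right (hslice ξ hξ) _
    _ ≤ ∫⁻ ξ, f ξ * ∫⁻ t in Icc (a - b) (b - a), K t := setLIntegral_le_lintegral _ _
    _ = (∫⁻ x, f x) * ∫⁻ t in Icc (a - b) (b - a), K t := lintegral_mul_const'' _ hf

theorem locallyIntegrable_abs_rpow {s : ℝ} (hs : -1 < s) :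
    LocallyIntegrable (fun t : ℝ => |t| ^ s) := by
  refine locallyIntegrable_of_norm_le_rpow (C := 1) (α := -s) (by simp) (by simp; linarith)
    (ae_of_all _ fun t => ?_) (measurable_abs.pow_const s).aestronglyMeasurable
  simp [abs_of_nonneg (Real.rpow_nonneg (abs_nonneg t) s)]

theorem ENNReal.mul_le_sq_add_sq (x y : ℝ≥0∞) : x * y ≤ x ^ 2 + y ^ 2 := by
  rcases le_total x y with h | h
  · calc x * y ≤ y ^ 2 := by rw [sq]; exact mul_le_mul_left h y
      _ ≤ x ^ 2 + y ^ 2 := le_add_self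
  · calc x * y ≤ x ^ 2 := by rw [sq]; exact mul_le_mul_right h x
      _ ≤ x ^ 2 + y ^ 2 := le_self_add

theorem MeasureTheory.MemLp.lintegral_enorm_sq_lt_top {α E : Type*} [MeasurableSpace α]
    {μ : Measure α} [NormedAddCommGroup E] {f : α → E} (hf : MemLp f 2 μ) :
    ∫⁻ x, ‖f x‖ₑ ^ 2 ∂μ < ∞ := by
  simpa using lintegral_rpow_enorm_lt_top_of_eLpNorm_lt_top two_ne_zero ENNReal.ofNat_ne_top hf.2

theorem integrableOn_mul_mul_abs_sub_rpow {a b s : ℝ} {u v : ℝ → ℝ} (hs : -1 < s)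
    (hu : MemLp u 2) (hv : MemLp v 2) :
    IntegrableOn (fun p : ℝ × ℝ => u p.1 * v p.2 * |p.2 - p.1| ^ s) (Ioc a b ×ˢ Ioc a b) := by
  set K : ℝ → ℝ≥0∞ := fun t => ‖|t| ^ s‖ₑ
  have hK : Measurable K := (measurable_abs.pow_const s).enorm
  have hC : ∫⁻ t in Icc (a - b) (b - a), K t < ∞ :=
    ((locallyIntegrable_abs_rpow hs).integrableOn_isCompact isCompact_Icc).2
  have hKm : AEMeasurable fun p : ℝ × ℝ => K (p.2 - p.1) :=
    (hK.comp (measurable_snd.sub measurable_fst)).aemeasurable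
  have hu_term : ∫⁻ p in Ioc a b ×ˢ Ioc a b, ‖u p.1‖ₑ ^ 2 * K (p.2 - p.1) < ∞ :=
    (setLIntegral_mul_comp_sub_le (hu.1.enorm.pow_const 2) hK).trans_lt
      (ENNReal.mul_lt_top hu.lintegral_enorm_sq_lt_top hC)
  have hv_term : ∫⁻ p in Ioc a b ×ˢ Ioc a b, ‖v p.2‖ₑ ^ 2 * K (p.2 - p.1) < ∞ := by
    have hK_swap : ∀ p : ℝ × ℝ, K (p.1 - p.2) = K (p.2 - p.1) := fun p => by
      simp only [K]; rw [abs_sub_comm]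
    rw [Measure.volume_eq_prod, ← Measure.prod_restrict, ← lintegral_prod_swap]
    simp only [Prod.fst_swap, Prod.snd_swap, hK_swap]
    rw [Measure.prod_restrict, ← Measure.volume_eq_prod]
    exact (setLIntegral_mul_comp_sub_le (hv.1.enorm.pow_const 2) hK).trans_lt
      (ENNReal.mul_lt_top hv.lintegral_enorm_sq_lt_top hC)
  refine ⟨((hu.1.comp_fst.mul hv.1.comp_snd).mul ((measurable_abs.pow_const s).comp
    (measurable_snd.sub measurable_fst)).aestronglyMeasurable).restrict, ?_⟩
  calc ∫⁻ p in Ioc a b ×ˢ Ioc a b, ‖u p.1 * v p.2 * |p.2 - p.1| ^ s‖ₑ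
      ≤ ∫⁻ p in Ioc a b ×ˢ Ioc a b,
          (‖u p.1‖ₑ ^ 2 * K (p.2 - p.1) + ‖v p.2‖ₑ ^ 2 * K (p.2 - p.1)) := by
        refine lintegral_mono fun p => ?_
        rw [enorm_mul, enorm_mul, ← add_mul]
        exact mul_le_mul_left (ENNReal.mul_le_sq_add_sq _ _) _
    _ < ∞ := by
        have hum : AEMeasurable (fun p : ℝ × ℝ => ‖u p.1‖ₑ ^ 2 * K (p.2 - p.1)) :=
          (hu.1.enorm.pow_const 2).comp_fst.mul hKm
        rw [lintegral_add_left' hum.restrict]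
        exact ENNReal.add_lt_top.2 ⟨hu_term, hv_term⟩

def upperTriangle (a b : ℝ) : Set (ℝ × ℝ) := {p | a < p.1 ∧ p.1 < p.2 ∧ p.2 ≤ b}

theorem measurableSet_upperTriangle (a b : ℝ) : MeasurableSet (upperTriangle a b) :=
  (measurableSet_lt measurable_const measurable_fst).inter
    ((measurableSet_lt measurable_fst measurable_snd).inter
      (measurableSet_le measurable_snd measurable_const))

theorem upperTriangle_subset (a b : ℝ) : upperTriangle a b ⊆ Ioc a b ×ˢ Ioc a b :=
  fun _ ⟨ha, h, hb⟩ => ⟨⟨ha, h.le.trans hb⟩, ha.trans h, hb⟩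

noncomputable def rlProductIntegrand (ν a b : ℝ) (u v : ℝ → ℝ) (x : ℝ) (p : ℝ × ℝ) : ℝ :=
  (Ioc a x).indicator (fun ξ => (x - ξ) ^ (ν - 1) * u ξ) p.1 *
    (Ioc x b).indicator (fun η => (η - x) ^ (ν - 1) * v η) p.2

section rlProductIntegrand

variable {ν a b : ℝ} {u v : ℝ → ℝ}

theorem RLleft_mul_RLright_eq_integral_rlProductIntegrand {x : ℝ} (hx : x ∈ Icc a b) :
    RLleft ν a u x * RLright ν b v x =
      (Real.Gamma ν)⁻¹ ^ 2 * ∫ p, rlProductIntegrand ν a b u v x p := by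
  simp only [rlProductIntegrand]
  rw [RLleft, RLright, intervalIntegral.integral_of_le hx.1, intervalIntegral.integral_of_le hx.2,
    ← integral_indicator measurableSet_Ioc, ← integral_indicator measurableSet_Ioc,
    Measure.volume_eq_prod, integral_prod_mul]
  ring

theorem rlProductIntegrand_eq_indicator (x : ℝ) (p : ℝ × ℝ) :
    rlProductIntegrand ν a b u v x p = (upperTriangle a b ∩ {p | x ∈ Ico p.1 p.2}).indicator
      (fun p => u p.1 * v p.2 * ((x - p.1) ^ (ν - 1) * (p.2 - x) ^ (ν - 1))) p := by
  have hmem : p.1 ∈ Ioc a x ∧ p.2 ∈ Ioc x b ↔ p ∈ upperTriangle a b ∩ {p | x ∈ Ico p.1 p.2} := by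
    simp only [upperTriangle, mem_inter_iff, mem_Ioc, mem_Ico, mem_ofPred]
    constructor
    · rintro ⟨⟨h₁, h₂⟩, h₃, h₄⟩; exact ⟨⟨h₁, h₂.trans_lt h₃, h₄⟩, h₂, h₃⟩
    · rintro ⟨⟨h₁, -, h₄⟩, h₂, h₃⟩; exact ⟨⟨h₁, h₂⟩, h₃, h₄⟩
  classical
  simp only [rlProductIntegrand, indicator_apply]
  rw [ite_zero_mul_ite_zero, if_congr hmem rfl rfl]
  split_ifs <;> ring

theorem rlProductIntegrand_of_notMem_Ioc {x : ℝ} (hx : x ∉ Ioc a b) (p : ℝ × ℝ) :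
    rlProductIntegrand ν a b u v x p = 0 := by
  rw [rlProductIntegrand_eq_indicator]
  exact indicator_of_notMem (fun h => hx ⟨h.1.1.trans_le h.2.1, h.2.2.le.trans h.1.2.2⟩) _

theorem rlProductIntegrand_of_notMem {p : ℝ × ℝ} (hp : p ∉ upperTriangle a b) (x : ℝ) :
    rlProductIntegrand ν a b u v x p = 0 := by
  rw [rlProductIntegrand_eq_indicator]
  exact indicator_of_notMem (fun h => hp h.1) _

theorem rlProductIntegrand_of_mem {p : ℝ × ℝ} (hp : p ∈ upperTriangle a b) :
    (fun x => rlProductIntegrand ν a b u v x p) = (Ico p.1 p.2).indicator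
      fun x => u p.1 * v p.2 * ((x - p.1) ^ (ν - 1) * (p.2 - x) ^ (ν - 1)) := by
  classical
  ext x
  simp only [rlProductIntegrand_eq_indicator, indicator_apply, mem_inter_iff, hp, true_and]
  rfl

theorem integral_rlProductIntegrand (hν : 0 < ν) (p : ℝ × ℝ) :
    ∫ x, rlProductIntegrand ν a b u v x p = (upperTriangle a b).indicator
      (fun p => ProbabilityTheory.beta ν ν * (u p.1 * v p.2 * (p.2 - p.1) ^ (2 * ν - 1))) p := by
  by_cases hp : p ∈ upperTriangle a b
  · rw [rlProductIntegrand_of_mem hp, integral_indicator measurableSet_Ico,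
      setIntegral_congr_set Ico_ae_eq_Ioc, ← intervalIntegral.integral_of_le hp.2.1.le,
      intervalIntegral.integral_const_mul, integral_sub_rpow_mul_sub_rpow hν hν hp.2.1,
      indicator_of_mem hp, ← two_mul]
    ring
  · simp [rlProductIntegrand_of_notMem hp, hp]

theorem integrable_rlProductIntegrand (hν : 0 < ν) (p : ℝ × ℝ) :
    Integrable fun x => rlProductIntegrand ν a b u v x p := by
  by_cases hp : p ∈ upperTriangle a b
  · rw [rlProductIntegrand_of_mem hp, integrable_indicator_iff measurableSet_Ico,
      ← intervalIntegrable_iff_integrableOn_Ico_of_le hp.2.1.le]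
    exact (intervalIntegrable_sub_rpow_mul_sub_rpow hν hν hp.2.1).const_mul _
  · simp [rlProductIntegrand_of_notMem hp]

theorem norm_rlProductIntegrand (x : ℝ) (p : ℝ × ℝ) :
    ‖rlProductIntegrand ν a b u v x p‖ =
      rlProductIntegrand ν a b (fun ξ => |u ξ|) (fun η => |v η|) x p := by
  rw [rlProductIntegrand_eq_indicator, rlProductIntegrand_eq_indicator,
    norm_indicator_eq_indicator_norm]
  refine congrFun (indicator_congr fun q hq => ?_) p
  rw [Real.norm_eq_abs, abs_mul, abs_mul, abs_of_nonneg (mul_nonneg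
    (Real.rpow_nonneg (sub_nonneg.2 hq.2.1) _) (Real.rpow_nonneg (sub_nonneg.2 hq.2.2.le) _))]

theorem aestronglyMeasurable_rlProductIntegrand (hu : AEStronglyMeasurable u)
    (hv : AEStronglyMeasurable v) :
    AEStronglyMeasurable (Function.uncurry (rlProductIntegrand ν a b u v))
      (volume.prod volume) := by
  have hleft : AEStronglyMeasurable (fun q : ℝ × ℝ × ℝ =>
      {q : ℝ × ℝ × ℝ | q.2.1 ∈ Ioc a q.1}.indicator
        (fun q => (q.1 - q.2.1) ^ (ν - 1) * u q.2.1) q) (volume.prod volume) :=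
    (((by fun_prop : Measurable fun q : ℝ × ℝ × ℝ => (q.1 - q.2.1) ^ (ν - 1))
      |>.aestronglyMeasurable.mul hu.comp_fst.comp_snd).indicator
      ((measurableSet_lt measurable_const measurable_snd.fst).inter
        (measurableSet_le measurable_snd.fst measurable_fst)))
  have hright : AEStronglyMeasurable (fun q : ℝ × ℝ × ℝ =>
      {q : ℝ × ℝ × ℝ | q.2.2 ∈ Ioc q.1 b}.indicator
        (fun q => (q.2.2 - q.1) ^ (ν - 1) * v q.2.2) q) (volume.prod volume) :=
    (((by fun_prop : Measurable fun q : ℝ × ℝ × ℝ => (q.2.2 - q.1) ^ (ν - 1))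
      |>.aestronglyMeasurable.mul hv.comp_snd.comp_snd).indicator
      ((measurableSet_lt measurable_fst measurable_snd.snd).inter
        (measurableSet_le measurable_snd.snd measurable_const)))
  exact hleft.mul hright

theorem integrable_uncurry_rlProductIntegrand (hν : 0 < ν) (hu : AEStronglyMeasurable u)
    (hv : AEStronglyMeasurable v)
    (huv : IntegrableOn (fun p : ℝ × ℝ => u p.1 * v p.2 * (p.2 - p.1) ^ (2 * ν - 1))
      (upperTriangle a b)) :
    Integrable (Function.uncurry (rlProductIntegrand ν a b u v)) (volume.prod volume) := by
  rw [integrable_prod_iff' (aestronglyMeasurable_rlProductIntegrand hu hv)]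
  refine ⟨ae_of_all _ (integrable_rlProductIntegrand hν), ?_⟩
  simp only [Function.uncurry_apply_pair, norm_rlProductIntegrand, integral_rlProductIntegrand hν]
  refine (integrable_indicator_iff (measurableSet_upperTriangle a b)).2
    ((IntegrableOn.congr_fun huv.norm (fun p hp => ?_)
      (measurableSet_upperTriangle a b)).const_mul _)
  rw [Real.norm_eq_abs, abs_mul, abs_mul,
    abs_of_nonneg (Real.rpow_nonneg (sub_nonneg.2 hp.2.1.le) _)]

theorem integral_RLleft_mul_RLright (hν : 0 < ν) (hab : a ≤ b) (hu : AEStronglyMeasurable u)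
    (hv : AEStronglyMeasurable v)
    (huv : IntegrableOn (fun p : ℝ × ℝ => u p.1 * v p.2 * (p.2 - p.1) ^ (2 * ν - 1))
      (upperTriangle a b)) :
    ∫ x in a..b, RLleft ν a u x * RLright ν b v x =
      1 / Real.Gamma (2 * ν) *
        ∫ p in upperTriangle a b, u p.1 * v p.2 * (p.2 - p.1) ^ (2 * ν - 1) := by
  calc ∫ x in a..b, RLleft ν a u x * RLright ν b v x
      = ∫ x in a..b, (Real.Gamma ν)⁻¹ ^ 2 * ∫ p, rlProductIntegrand ν a b u v x p :=
        intervalIntegral.integral_congr fun x hx =>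
          RLleft_mul_RLright_eq_integral_rlProductIntegrand (by rwa [uIcc_of_le hab] at hx)
    _ = (Real.Gamma ν)⁻¹ ^ 2 * ∫ x, ∫ p, rlProductIntegrand ν a b u v x p := by
        rw [intervalIntegral.integral_const_mul, intervalIntegral.integral_of_le hab,
          setIntegral_eq_integral_of_forall_compl_eq_zero fun x hx => by
            simp [rlProductIntegrand_of_notMem_Ioc hx]]
    _ = (Real.Gamma ν)⁻¹ ^ 2 * ∫ p, ∫ x, rlProductIntegrand ν a b u v x p := by
        rw [integral_integral_swap (integrable_uncurry_rlProductIntegrand hν hu hv huv)]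
    _ = _ := by
        simp only [integral_rlProductIntegrand hν]
        rw [integral_indicator (measurableSet_upperTriangle a b), integral_const_mul,
          ProbabilityTheory.beta, ← two_mul]
        have := (Real.Gamma_pos_of_pos hν).ne'
        field_simp

end rlProductIntegrand

section Symmetrization

variable {a b s : ℝ} {u v : ℝ → ℝ}

theorem MeasureTheory.IntegrableOn.mono_upperTriangle
    (huv : IntegrableOn (fun p : ℝ × ℝ => u p.1 * v p.2 * |p.2 - p.1| ^ s) (Ioc a b ×ˢ Ioc a b)) :
    IntegrableOn (fun p : ℝ × ℝ => u p.1 * v p.2 * (p.2 - p.1) ^ s) (upperTriangle a b) :=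
  (huv.mono_set (upperTriangle_subset a b)).congr_fun
    (fun p hp => by simp only [abs_of_pos (sub_pos.2 hp.2.1)]) (measurableSet_upperTriangle a b)

theorem setIntegral_upperTriangle_add_swap (hs : s ≠ 0)
    (huv : IntegrableOn (fun p : ℝ × ℝ => u p.1 * v p.2 * |p.2 - p.1| ^ s) (Ioc a b ×ˢ Ioc a b)) :
    (∫ p in upperTriangle a b, u p.1 * v p.2 * (p.2 - p.1) ^ s) +
        ∫ p in upperTriangle a b, v p.1 * u p.2 * (p.2 - p.1) ^ s =
      ∫ ξ in Ioc a b, ∫ η in Ioc a b, u ξ * v η * |η - ξ| ^ s := by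
  have hT := measurableSet_upperTriangle a b
  have hT' : MeasurableSet (Prod.swap ⁻¹' upperTriangle a b) := measurable_swap hT
  have hsub : upperTriangle a b ∪ Prod.swap ⁻¹' upperTriangle a b ⊆ Ioc a b ×ˢ Ioc a b :=
    union_subset (upperTriangle_subset a b) fun p hp => (upperTriangle_subset a b hp).symm
  -- on the diagonal the kernel is `0 ^ s = 0`, since `s ≠ 0`
  have hdiag : ∀ p ∈ Ioc a b ×ˢ Ioc a b \ (upperTriangle a b ∪ Prod.swap ⁻¹' upperTriangle a b),
      u p.1 * v p.2 * |p.2 - p.1| ^ s = 0 := by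
    rintro p ⟨⟨⟨ha₁, hb₁⟩, ha₂, hb₂⟩, hp⟩
    obtain h | h | h := lt_trichotomy p.1 p.2
    · exact absurd (Or.inl ⟨ha₁, h, hb₂⟩) hp
    · simp [h, Real.zero_rpow hs]
    · exact absurd (Or.inr ⟨ha₂, h, hb₁⟩) hp
  have hlower : ∫ p in upperTriangle a b, v p.1 * u p.2 * (p.2 - p.1) ^ s =
      ∫ p in Prod.swap ⁻¹' upperTriangle a b, u p.1 * v p.2 * |p.2 - p.1| ^ s := by
    have h := (Measure.measurePreserving_swap (μ := (volume : Measure ℝ))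
      (ν := volume)).setIntegral_preimage_emb MeasurableEquiv.prodComm.measurableEmbedding
      (fun p => v p.1 * u p.2 * (p.2 - p.1) ^ s) (upperTriangle a b)
    rw [← Measure.volume_eq_prod] at h
    rw [← h]
    refine setIntegral_congr_fun hT' fun p hp => ?_
    have h21 : p.2 < p.1 := hp.2.1
    simp only [Prod.fst_swap, Prod.snd_swap, abs_of_neg (sub_neg.2 h21), neg_sub]
    ring
  have hupper : ∫ p in upperTriangle a b, u p.1 * v p.2 * (p.2 - p.1) ^ s =
      ∫ p in upperTriangle a b, u p.1 * v p.2 * |p.2 - p.1| ^ s :=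
    setIntegral_congr_fun hT fun p hp => by simp only [abs_of_pos (sub_pos.2 hp.2.1)]
  rw [hupper, hlower,
    ← setIntegral_union (disjoint_left.2 fun p hp hp' => hp.2.1.not_gt hp'.2.1) hT'
      (huv.mono_set (subset_union_left.trans hsub)) (huv.mono_set (subset_union_right.trans hsub)),
    ← setIntegral_eq_of_subset_of_forall_sdiff_eq_zero (measurableSet_Ioc.prod measurableSet_Ioc)
      hsub hdiag, Measure.volume_eq_prod, setIntegral_prod _ huv]

end Symmetrization

theorem stmt1_general (ν a b : ℝ) (hν : ν ∈ Set.Ioo (0 : ℝ) (1 / 2)) (hab : a < b)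
    (u v : ℝ → ℝ)
    (hu : MemLp u 2 (volume : Measure ℝ)) (hv : MemLp v 2 (volume : Measure ℝ)) :
    (∫ x in a..b, RLleft ν a u x * RLright ν b v x) +
      (∫ x in a..b, RLleft ν a v x * RLright ν b u x) =
      (1 / Real.Gamma (2 * ν)) *
        ∫ ξ in a..b, ∫ η in a..b, u ξ * v η * |η - ξ| ^ (2 * ν - 1) := by
  obtain ⟨hν₀, hν₁⟩ := hν
  have hs : -1 < 2 * ν - 1 := by linarith
  have huv := integrableOn_mul_mul_abs_sub_rpow (a := a) (b := b) hs hu hv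
  have hvu := integrableOn_mul_mul_abs_sub_rpow (a := a) (b := b) hs hv hu
  rw [integral_RLleft_mul_RLright hν₀ hab.le hu.1 hv.1 huv.mono_upperTriangle,
    integral_RLleft_mul_RLright hν₀ hab.le hv.1 hu.1 hvu.mono_upperTriangle, ← mul_add,
    setIntegral_upperTriangle_add_swap (by linarith) huv]
  simp only [intervalIntegral.integral_of_le hab.le]

theorem stmt1 (ν a b : ℝ) (hν : ν ∈ Set.Ioo (0 : ℝ) (1 / 2)) (hab : a < b)
    (u v : ℝ → ℝ)
    (hu : MemLp u 2 (volume : Measure ℝ)) (hv : MemLp v 2 (volume : Measure ℝ))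
    (hu0 : ∀ x, x ∉ Set.Icc a b → u x = 0) (hv0 : ∀ x, x ∉ Set.Icc a b → v x = 0) :
    (∫ x in a..b, RLleft ν a u x * RLright ν b v x) +
      (∫ x in a..b, RLleft ν a v x * RLright ν b u x) =
      (1 / Real.Gamma (2 * ν)) *
        ∫ ξ in a..b, ∫ η in a..b, u ξ * v η * |η - ξ| ^ (2 * ν - 1) :=
  stmt1_general ν a b hν hab u v hu hv
end

section
/- Let α ∈ (0,1), θ ∈ (π/2, π), and σ ∈ [0,1]. There exists a constant C > 0, depending only on α and θ, such that for every complex number z ≠ 0 with |arg z| ≤ θ and every real λ > 0: λ^σ · |z|^{α-1} / |z^α + λ| ≤ C · |z|^{σα-1}, where z^α = exp(α · Log z) is defined via the principal branch of the logarithm. -/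
/-! Write `w = z ^ α`, so `‖w‖ = ‖z‖ ^ α` and `arg w = α arg z` lies in `[-αθ, αθ]` with `αθ < π`.
A cone bound on `re w` gives `‖w + λ‖ ≥ c (‖w‖ + λ)` with `c = √((1 + cos αθ) / 2) > 0`, while the
weighted AM-GM inequality gives `λ ^ σ ‖w‖ ^ (1 - σ) ≤ ‖w‖ + λ`; together with
`‖z‖ ^ (α - 1) = ‖w‖ ^ (1 - σ) ‖z‖ ^ (σα - 1)` this is the estimate with `C = 1 / c`. -/

namespace Complex

lemma sq_norm_add_ofReal (w : ℂ) (s : ℝ) : ‖w + s‖ ^ 2 = ‖w‖ ^ 2 + 2 * s * w.re + s ^ 2 := by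
  simp only [Complex.sq_norm, normSq_apply, add_re, add_im, ofReal_re, ofReal_im, add_zero]
  ring

lemma sqrt_mul_add_le_norm_add_ofReal {w : ℂ} {s κ : ℝ} (hs : 0 ≤ s) (hκ : κ ≤ 1)
    (hre : κ * ‖w‖ ≤ w.re) : √((1 + κ) / 2) * (‖w‖ + s) ≤ ‖w + s‖ := by
  have hsq : (1 + κ) / 2 * (‖w‖ + s) ^ 2 ≤ ‖w + s‖ ^ 2 := by
    rw [sq_norm_add_ofReal]
    nlinarith [mul_nonneg (sub_nonneg.2 hκ) (sq_nonneg (‖w‖ - s)), mul_le_mul_of_nonneg_left hre hs]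
  calc √((1 + κ) / 2) * (‖w‖ + s) = √((1 + κ) / 2 * (‖w‖ + s) ^ 2) := by
        rw [Real.sqrt_mul' _ (sq_nonneg _), Real.sqrt_sq (by positivity)]
    _ ≤ √(‖w + s‖ ^ 2) := Real.sqrt_le_sqrt hsq
    _ = ‖w + s‖ := Real.sqrt_sq (norm_nonneg _)

lemma cos_mul_norm_cpow_ofReal_le_re {z : ℂ} {α θ : ℝ} (hα : 0 ≤ α) (harg : |z.arg| ≤ θ)
    (hαθ : α * θ ≤ Real.pi) : Real.cos (α * θ) * ‖z ^ (α : ℂ)‖ ≤ (z ^ (α : ℂ)).re := by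
  rw [norm_cpow_real, cpow_ofReal_re, mul_comm (Real.cos _)]
  refine mul_le_mul_of_nonneg_left ?_ (by positivity)
  rw [← Real.cos_abs (z.arg * α)]
  refine Real.cos_le_cos_of_nonneg_of_le_pi (abs_nonneg _) hαθ ?_
  rw [abs_mul, abs_of_nonneg hα, mul_comm]
  exact mul_le_mul_of_nonneg_left harg hα

end Complex

lemma Real.rpow_mul_rpow_one_sub_le_add {a b σ : ℝ} (ha : 0 ≤ a) (hb : 0 ≤ b) (hσ₀ : 0 ≤ σ)
    (hσ₁ : σ ≤ 1) : a ^ σ * b ^ (1 - σ) ≤ a + b := by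
  have := Real.geom_mean_le_arith_mean2_weighted hσ₀ (sub_nonneg.2 hσ₁) ha hb (by ring)
  nlinarith

theorem stmt5 (α θ : ℝ) (hα : α ∈ Set.Ioo (0 : ℝ) 1)
    (hθ : θ ∈ Set.Ioo (Real.pi / 2) Real.pi) :
    ∃ C > (0 : ℝ), ∀ σ ∈ Set.Icc (0 : ℝ) 1, ∀ z : ℂ, z ≠ 0 → |z.arg| ≤ θ →
      ∀ lam : ℝ, 0 < lam →
        lam ^ σ * ‖z‖ ^ (α - 1) / ‖z ^ (α : ℂ) + (lam : ℂ)‖ ≤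
          C * ‖z‖ ^ (σ * α - 1) := by
  obtain ⟨hα₀, hα₁⟩ := hα
  obtain ⟨hθ₀, hθ₁⟩ := hθ
  have hαθ : α * θ < Real.pi := by nlinarith [Real.pi_pos]
  have hcos : -1 < Real.cos (α * θ) := by
    simpa using Real.cos_lt_cos_of_nonneg_of_le_pi (by nlinarith [Real.pi_pos]) le_rfl hαθ
  set c := √((1 + Real.cos (α * θ)) / 2)
  have hc : 0 < c := Real.sqrt_pos.2 (by linarith)
  refine ⟨c⁻¹, inv_pos.2 hc, fun σ ⟨hσ₀, hσ₁⟩ z hz harg lam hlam => ?_⟩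
  have hr : 0 < ‖z‖ := norm_pos_iff.2 hz
  have hlower := Complex.sqrt_mul_add_le_norm_add_ofReal hlam.le (Real.cos_le_one _)
    (Complex.cos_mul_norm_cpow_ofReal_le_re hα₀.le harg hαθ.le)
  rw [Complex.norm_cpow_real] at hlower
  have hsplit : ‖z‖ ^ (α - 1) = (‖z‖ ^ α) ^ (1 - σ) * ‖z‖ ^ (σ * α - 1) := by
    rw [← Real.rpow_mul hr.le, ← Real.rpow_add hr]
    ring_nf
  rw [div_le_iff₀ (lt_of_lt_of_le (by positivity) hlower), hsplit, ← mul_assoc]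
  calc lam ^ σ * (‖z‖ ^ α) ^ (1 - σ) * ‖z‖ ^ (σ * α - 1)
      ≤ (‖z‖ ^ α + lam) * ‖z‖ ^ (σ * α - 1) := by
        gcongr
        rw [add_comm]
        exact Real.rpow_mul_rpow_one_sub_le_add hlam.le (by positivity) hσ₀ hσ₁
    _ ≤ c⁻¹ * ‖z ^ (α : ℂ) + lam‖ * ‖z‖ ^ (σ * α - 1) := by
        gcongr
        rwa [le_inv_mul_iff₀ hc]
    _ = c⁻¹ * ‖z‖ ^ (σ * α - 1) * ‖z ^ (α : ℂ) + lam‖ := by ring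
end
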